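/- arXiv:2006.06876 — 3 statements merged into one kernel-verified Lean document; each statement's English description precedes it below -/
import Mathlib

section
/- Let Γ be a finite group and F a Γ-lattice. Then F is flasque if and only if Ext^1_Γ(F, Q) = 0 for every invertible Γ-lattice Q. -/
/-! Basic definitions for Γ-lattices over a finite group Γ. -/

/-- A `Γ`-lattice: a finitely generated free `ℤ`-module equipped with a
`ℤ`-linear action of `Γ`, i.e. a `ℤ[Γ]`-module which is finitely generated
and free as a `ℤ`-module. -/
structure GammaLattice (Γ : Type) [Group Γ] where
  carrier : Type
  [isAddCommGroup : AddCommGroup carrier]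
  [isModule : Module ℤ carrier]
  ρ : Representation ℤ Γ carrier
  free : Module.Free ℤ carrier
  finite : Module.Finite ℤ carrier

attribute [instance] GammaLattice.isAddCommGroup GammaLattice.isModule

variable {Γ : Type} [Group Γ]

/-- A `ℤ`-linear map between `Γ`-representations is equivariant (i.e. is a
`ℤ[Γ]`-module homomorphism) if it commutes with the `Γ`-actions. -/
def IsEquivariantMap {M N : Type} [AddCommGroup M] [Module ℤ M]
    [AddCommGroup N] [Module ℤ N]
    (ρM : Representation ℤ Γ M) (ρN : Representation ℤ Γ N)
    (f : M →ₗ[ℤ] N) : Prop :=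
  ∀ (γ : Γ) (m : M), f (ρM γ m) = ρN γ (f m)

/-- A short exact sequence `0 → A → B → C → 0` of `ℤ[Γ]`-modules. -/
def IsShortExactSeq {A B C : Type} [AddCommGroup A] [Module ℤ A]
    [AddCommGroup B] [Module ℤ B] [AddCommGroup C] [Module ℤ C]
    (ρA : Representation ℤ Γ A) (ρB : Representation ℤ Γ B)
    (ρC : Representation ℤ Γ C)
    (f : A →ₗ[ℤ] B) (g : B →ₗ[ℤ] C) : Prop :=
  IsEquivariantMap ρA ρB f ∧ IsEquivariantMap ρB ρC g ∧
    Function.Injective f ∧ Function.Surjective g ∧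
    LinearMap.range f = LinearMap.ker g

/-- A `Γ`-lattice is a permutation lattice if it has a `ℤ`-basis permuted
by `Γ`. -/
def GammaLattice.IsPermutation (L : GammaLattice Γ) : Prop :=
  ∃ (ι : Type) (b : Module.Basis ι ℤ L.carrier),
    ∀ (γ : Γ) (i : ι), ∃ j : ι, L.ρ γ (b i) = b j

/-- A `Γ`-lattice is invertible if it is a direct summand of a permutation
`Γ`-lattice. -/
def GammaLattice.IsInvertible (L : GammaLattice Γ) : Prop :=
  ∃ N : GammaLattice Γ, N.IsPermutation ∧
    ∃ (i : L.carrier →ₗ[ℤ] N.carrier) (p : N.carrier →ₗ[ℤ] L.carrier),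
      IsEquivariantMap L.ρ N.ρ i ∧ IsEquivariantMap N.ρ L.ρ p ∧
        p.comp i = LinearMap.id

/-- A `Γ`-lattice is coflasque if `H¹(Γ', M) = 0` for every subgroup
`Γ' ≤ Γ`. -/
def GammaLattice.IsCoflasque (L : GammaLattice Γ) : Prop :=
  ∀ Γ' : Subgroup Γ,
    Subsingleton (groupCohomology.H1 (Rep.of (L.ρ.comp Γ'.subtype)))

/-- The dual lattice `M^∨ = Hom_ℤ(M, ℤ)` with the action
`(γ · f)(m) = f(γ⁻¹ · m)`. -/
noncomputable def GammaLattice.dual (L : GammaLattice Γ) : GammaLattice Γ where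
  carrier := Module.Dual ℤ L.carrier
  ρ := L.ρ.dual
  free := by have := L.free; have := L.finite; infer_instance
  finite := by have := L.free; have := L.finite; infer_instance

/-- A `Γ`-lattice is flasque if its dual is coflasque. -/
noncomputable def GammaLattice.IsFlasque (L : GammaLattice Γ) : Prop :=
  L.dual.IsCoflasque

/-- `Ext¹_Γ(A, B) = 0`, formulated as: every short exact sequence of
`ℤ[Γ]`-modules `0 → B → E → A → 0` splits (admits an equivariant section). -/
def Ext1Vanishes {A B : Type} [AddCommGroup A] [Module ℤ A]
    [AddCommGroup B] [Module ℤ B]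
    (ρA : Representation ℤ Γ A) (ρB : Representation ℤ Γ B) : Prop :=
  ∀ (E : Type) [AddCommGroup E] [Module ℤ E],
    ∀ (ρE : Representation ℤ Γ E) (ι : B →ₗ[ℤ] E) (π : E →ₗ[ℤ] A),
      IsShortExactSeq ρB ρE ρA ι π →
      ∃ s : A →ₗ[ℤ] E, IsEquivariantMap ρA ρE s ∧ π.comp s = LinearMap.id

/-- The direct sum (product) of two representations. -/
def prodRep {M N : Type} [AddCommGroup M] [Module ℤ M]
    [AddCommGroup N] [Module ℤ N]
    (ρM : Representation ℤ Γ M) (ρN : Representation ℤ Γ N) :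
    Representation ℤ Γ (M × N) where
  toFun γ := (ρM γ).prodMap (ρN γ)
  map_one' := by ext x <;> simp
  map_mul' g h := by ext x <;> simp [Module.End.mul_apply]

/-! For a `ℤ`-free `F`, splitting of extensions of `F` by `Q` is the vanishing of
`H¹(Γ, Hom(F, Q))`: a `ℤ`-linear section `s₀` has equivariance defect `g s₀ - s₀`, a cocycle in
`Hom(F, Q)`, and conversely a cocycle twists the action on `Q × F`. If `N` is a permutation
lattice with basis permuted like the `Γ`-set `X`, then `Hom(F, N) ≅ Maps(X, F^∨)`, and by
Shapiro's lemma `H¹(Γ, Maps(X, F^∨))` is the product of the `H¹(Γ_x, F^∨)` over orbit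
representatives `x`. Hence flasqueness of `F` kills `Ext¹(F, N)`, and so `Ext¹(F, Q)` for every
direct summand `Q` of `N`; conversely `Ext¹(F, ℤ[Γ/S]) = 0` gives `H¹(S, F^∨) = 0`. -/

namespace Representation

section Cohomology

/- The `Module` instances are implicit, to be read off from the representations: over `ℤ`,
type-class search finds `AddCommGroup.toIntModule` on spaces like `A →ₗ[ℤ] B`, which is not
defeq to the instance that `linHom` carries. -/
variable {k M N : Type} [CommRing k] [AddCommGroup M] {_ : Module k M} [AddCommGroup N]
  {_ : Module k N}

def IsOneCocycle (ρ : Representation k Γ M) (c : Γ → M) : Prop :=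
  ∀ g h, c (g * h) = ρ g (c h) + c g

def H1Vanishes (ρ : Representation k Γ M) : Prop :=
  ∀ c : Γ → M, ρ.IsOneCocycle c → ∃ m, ∀ g, c g = ρ g m - m

theorem subsingleton_H1_iff_h1Vanishes (ρ : Representation k Γ M) :
    Subsingleton (groupCohomology.H1 (Rep.of ρ)) ↔ ρ.H1Vanishes := by
  constructor
  · intro h c hc
    have hc' : c ∈ groupCohomology.cocycles₁ (Rep.of ρ) :=
      (groupCohomology.mem_cocycles₁_iff (A := Rep.of ρ) c).2 hc
    obtain ⟨m, hm⟩ := (groupCohomology.H1π_eq_zero_iff _).1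
      (Subsingleton.elim (groupCohomology.H1π (Rep.of ρ) ⟨c, hc'⟩) 0)
    exact ⟨m, fun g => (congrFun hm g).symm⟩
  · intro h
    refine subsingleton_of_forall_eq 0 fun x => ?_
    induction x using groupCohomology.H1_induction_on with | h x =>
    obtain ⟨m, hm⟩ := h x ((groupCohomology.mem_cocycles₁_iff x).1 x.2)
    exact (groupCohomology.H1π_eq_zero_iff _).2 ⟨m, funext fun g => (hm g).symm⟩

theorem isOneCocycle_coboundary (ρ : Representation k Γ M) (m : M) :
    ρ.IsOneCocycle fun g => ρ g m - m := fun g h => by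
  simp only [map_mul, Module.End.mul_apply, map_sub]; abel

theorem IsOneCocycle.of_comp {ρM : Representation k Γ M} {ρN : Representation k Γ N}
    {i : M →ₗ[k] N} (hi : IsIntertwiningMap ρM ρN i) (hinj : Function.Injective i) {c : Γ → M}
    (hc : ρN.IsOneCocycle (i ∘ c)) : ρM.IsOneCocycle c := fun g h =>
  hinj (by simpa only [Function.comp_apply, map_add, hi.isIntertwining] using hc g h)

theorem H1Vanishes.of_retract {ρM : Representation k Γ M} {ρN : Representation k Γ N}
    {i : M →ₗ[k] N} {p : N →ₗ[k] M} (hi : IsIntertwiningMap ρM ρN i)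
    (hp : IsIntertwiningMap ρN ρM p) (hpi : ∀ m, p (i m) = m) (h : ρN.H1Vanishes) :
    ρM.H1Vanishes := by
  intro c hc
  obtain ⟨n, hn⟩ := h (i ∘ c) fun g g' => by
    simp only [Function.comp_apply, hc g g', map_add, hi.isIntertwining]
  refine ⟨p n, fun g => ?_⟩
  rw [← hp.isIntertwining, ← map_sub, ← hn, Function.comp_apply, hpi]

theorem h1Vanishes_congr {ρM : Representation k Γ M} {ρN : Representation k Γ N}
    (e : ρM.Equiv ρN) : ρM.H1Vanishes ↔ ρN.H1Vanishes :=
  ⟨.of_retract ⟨e.symm.isIntertwining⟩ ⟨e.isIntertwining⟩ (by simp),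
    .of_retract ⟨e.isIntertwining⟩ ⟨e.symm.isIntertwining⟩ (by simp)⟩

theorem isIntertwiningMap_llcomp {A Q : Type} [AddCommGroup A] [Module k A] [AddCommGroup Q]
    [Module k Q] {ρA : Representation k Γ A} {ρN : Representation k Γ N}
    {ρQ : Representation k Γ Q} {f : N →ₗ[k] Q} (hf : IsIntertwiningMap ρN ρQ f) :
    IsIntertwiningMap (linHom ρA ρN) (linHom ρA ρQ) (LinearMap.llcomp k A N Q f) :=
  ⟨fun g φ => by ext; simp [hf.isIntertwining]⟩

end Cohomology

section OnFunctions

variable {k M : Type} [CommRing k] [AddCommGroup M] [Module k M]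

def onFunctions (ρ : Representation k Γ M) (X : Type) [MulAction Γ X] :
    Representation k Γ (X → M) where
  toFun g := LinearMap.pi fun x => ρ g ∘ₗ LinearMap.proj (g⁻¹ • x)
  map_one' := by ext; simp
  map_mul' g h := by ext; simp [mul_smul]

variable {ρ : Representation k Γ M} {X : Type} [MulAction Γ X]

@[simp]
theorem onFunctions_apply (g : Γ) (f : X → M) (x : X) :
    ρ.onFunctions X g f x = ρ g (f (g⁻¹ • x)) := rfl

theorem isOneCocycle_onFunctions_iff (c : Γ → X → M) :
    (ρ.onFunctions X).IsOneCocycle c ↔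
      ∀ g h x, c (g * h) x = ρ g (c h (g⁻¹ • x)) + c g x := by
  simp only [IsOneCocycle, funext_iff, Pi.add_apply, onFunctions_apply]

theorem IsOneCocycle.restrict_stabilizer {c : Γ → X → M}
    (hc : (ρ.onFunctions X).IsOneCocycle c) (x : X) :
    IsOneCocycle (ρ.comp (MulAction.stabilizer Γ x).subtype) fun s => c s x := by
  intro s t
  have hs : (s : Γ)⁻¹ • x = x := (MulAction.stabilizer Γ x).inv_mem s.2
  simpa [hs] using (isOneCocycle_onFunctions_iff c).1 hc s t x

/-- Shapiro's lemma, on each orbit of `X`. -/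
theorem h1Vanishes_onFunctions
    (h : ∀ x : X, H1Vanishes (ρ.comp (MulAction.stabilizer Γ x).subtype)) :
    (ρ.onFunctions X).H1Vanishes := by
  intro c hc
  have hc' := (isOneCocycle_onFunctions_iff c).1 hc
  choose m hm using fun x => h x _ (hc.restrict_stabilizer x)
  let r : X → X := fun x => (Quotient.mk (MulAction.orbitRel Γ X) x).out
  have hr_smul : ∀ (g : Γ) x, r (g • x) = r x := fun g x =>
    congrArg Quotient.out (Quotient.sound (MulAction.mem_orbit x g))
  have ht : ∀ x, ∃ t : Γ, t • r x = x := fun x =>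
    Quotient.exact (Quotient.out_eq (Quotient.mk (MulAction.orbitRel Γ X) x)).symm
  choose t ht using ht
  -- `φ` is built orbitwise from the primitives `m` at the chosen representatives `r x`.
  refine ⟨fun x => ρ (t x) (m (r x)) - c (t x) x, fun g => funext fun x => ?_⟩
  set y := g⁻¹ • x
  have hry : r y = r x := hr_smul _ _
  set s := (t x)⁻¹ * g * t y
  have hty : t y • r x = y := hry ▸ ht y
  have hs : s ∈ MulAction.stabilizer Γ (r x) := by
    rw [MulAction.mem_stabilizer_iff, mul_smul, mul_smul, hty, smul_inv_smul, inv_smul_eq_iff,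
      ht]
  have h_gt : g * t y = t x * s := by simp only [s]; group
  have h₁ := hc' g (t y) x
  have h₂ := hc' (t x) s x
  have hx : (t x)⁻¹ • x = r x := by rw [inv_smul_eq_iff, ht]
  have hρ : ρ (t x) (ρ s (m (r x))) = ρ g (ρ (t y) (m (r x))) := by
    rw [← Module.End.mul_apply, ← map_mul, ← h_gt, map_mul, Module.End.mul_apply]
  rw [← h_gt, hx, hm (r x) ⟨s, hs⟩, MonoidHom.comp_apply, Subgroup.coe_subtype, map_sub, hρ,
    h₁] at h₂
  rw [Pi.sub_apply, onFunctions_apply, hry, map_sub]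
  linear_combination (norm := module) h₂

/-- Shapiro's lemma for `X = Γ ⧸ S`. -/
theorem h1Vanishes_comp_subtype_of_onFunctions {S : Subgroup Γ}
    (h : (ρ.onFunctions (Γ ⧸ S)).H1Vanishes) : H1Vanishes (ρ.comp S.subtype) := by
  classical
  intro c hc
  let o : Γ ⧸ S := (1 : Γ)
  let x : Γ ⧸ S → Γ := fun w => if w = o then 1 else w.out
  have hx : ∀ w, (x w : Γ ⧸ S) = w := fun w => by
    by_cases hw : w = o <;> simp [x, hw, o]
  have hmem : ∀ g w, (x w)⁻¹ * g * x (g⁻¹ • w) ∈ S := fun g w => by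
    rw [mul_assoc, ← QuotientGroup.eq, ← smul_eq_mul, ← MulAction.Quotient.smul_mk, hx, hx,
      smul_inv_smul]
  let a : Γ → Γ ⧸ S → S := fun g w => ⟨_, hmem g w⟩
  have ha_mul : ∀ g h w, a (g * h) w = a g w * a h (g⁻¹ • w) := fun g h w => by
    ext; simp only [a, Subgroup.coe_mul, mul_inv_rev, mul_smul]; group
  have hxa : ∀ g w, x w * a g w = g * x (g⁻¹ • w) := fun g w => by simp only [a]; group
  let C : Γ → Γ ⧸ S → M := fun g w => ρ (x w) (c (a g w))
  have hC : (ρ.onFunctions (Γ ⧸ S)).IsOneCocycle C :=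
    (isOneCocycle_onFunctions_iff C).2 fun g h w => by
      simp only [C, ha_mul, hc _ _, MonoidHom.comp_apply, Subgroup.coe_subtype, map_add]
      rw [← Module.End.mul_apply, ← map_mul, hxa, map_mul, Module.End.mul_apply]
  obtain ⟨φ, hφ⟩ := h C hC
  refine ⟨φ o, fun s => ?_⟩
  have hso : (s : Γ)⁻¹ • o = o := by
    rw [MulAction.Quotient.smul_mk, smul_eq_mul, mul_one]
    exact QuotientGroup.eq.2 (by simp)
  have hxo : x o = 1 := if_pos rfl
  have has : a s o = s := by ext; simp only [a, hso, hxo]; group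
  simpa [C, hxo, has, hso] using congrFun (hφ s) o

end OnFunctions

section PermutationBasis

variable {k A N ι : Type} [CommRing k] [AddCommGroup A] [Module k A] [AddCommGroup N] [Module k N]
  [MulAction Γ ι] {ρN : Representation k Γ N} {b : Module.Basis ι k N}

theorem basis_repr_apply_of_smul (hb : ∀ g i, ρN g (b i) = b (g • i)) (g : Γ) (n : N) (i : ι) :
    b.repr (ρN g n) i = b.repr n (g⁻¹ • i) := by
  have : b.coord i ∘ₗ ρN g = b.coord (g⁻¹ • i) := b.ext fun j => by
    classical
    simp only [LinearMap.comp_apply, Module.Basis.coord_apply, hb, Module.Basis.repr_self,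
      Finsupp.single_apply, smul_eq_iff_eq_inv_smul]
  exact LinearMap.congr_fun this n

variable [Finite ι]

noncomputable def linHomEquivOnFunctions (ρA : Representation k Γ A)
    (hb : ∀ g i, ρN g (b i) = b (g • i)) :
    (linHom ρA ρN).Equiv (ρA.dual.onFunctions ι) :=
  .mk ((LinearEquiv.congrRight b.equivFun).trans
    { toFun := fun f i => LinearMap.proj i ∘ₗ f
      invFun := LinearMap.pi
      map_add' := fun _ _ => rfl
      map_smul' := fun _ _ => rfl
      left_inv := fun _ => rfl
      right_inv := fun _ => rfl })
    fun g => by ext f i a; exact basis_repr_apply_of_smul hb g _ i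

end PermutationBasis

section CocycleExtension

variable {k A B : Type} [CommRing k] [AddCommGroup A] [Module k A] [AddCommGroup B] [Module k B]
  (ρA : Representation k Γ A) (ρB : Representation k Γ B) {c : Γ → A →ₗ[k] B}

def cocycleExtension (hc : (linHom ρA ρB).IsOneCocycle c) : Representation k Γ (B × A) where
  toFun g := (ρB g ∘ₗ LinearMap.fst k B A + c g ∘ₗ ρA g ∘ₗ LinearMap.snd k B A).prod
    (ρA g ∘ₗ LinearMap.snd k B A)
  map_one' := by
    have hc1 : c 1 = 0 := by simpa using hc 1 1
    ext <;> simp [hc1]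
  map_mul' g h := LinearMap.ext fun x => by
    ext
    · simp [Module.End.mul_apply, hc g h, add_assoc]
    · simp [Module.End.mul_apply]

@[simp]
theorem cocycleExtension_apply (hc : (linHom ρA ρB).IsOneCocycle c) (g : Γ) (x : B × A) :
    cocycleExtension ρA ρB hc g x = (ρB g x.1 + c g (ρA g x.2), ρA g x.2) := rfl

end CocycleExtension

end Representation

theorem Module.Projective.exists_comp_eq_of_range_le {R P M N : Type} [CommRing R]
    [AddCommGroup P] [Module R P] [Module.Projective R P] [AddCommGroup M] [Module R M]
    [AddCommGroup N] [Module R N] {f : M →ₗ[R] N} {u : P →ₗ[R] N}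
    (h : LinearMap.range u ≤ LinearMap.range f) : ∃ c : P →ₗ[R] M, f ∘ₗ c = u := by
  obtain ⟨c, hc⟩ := Module.projective_lifting_property f.rangeRestrict
    (u.codRestrict _ fun p => h ⟨p, rfl⟩) f.surjective_rangeRestrict
  exact ⟨c, LinearMap.ext fun p => congrArg Subtype.val (LinearMap.congr_fun hc p)⟩

open Representation

section Ext

variable {A B : Type} [AddCommGroup A] [Module ℤ A] [AddCommGroup B] [Module ℤ B]
  {ρA : Representation ℤ Γ A} {ρB : Representation ℤ Γ B}

theorem h1Vanishes_linHom_of_ext1Vanishes (h : Ext1Vanishes ρA ρB) :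
    (linHom ρA ρB).H1Vanishes := by
  -- the instance `Ext1Vanishes` synthesizes on `B × A` must be the one `cocycleExtension` uses
  let _ : Module ℤ (B × A) := Prod.instModule
  intro c hc
  obtain ⟨s, hs, hsec⟩ := h (B × A) (cocycleExtension ρA ρB hc) (LinearMap.inl ℤ B A)
    (LinearMap.snd ℤ B A) ⟨fun g b => by simp, fun g x => rfl, LinearMap.inl_injective,
      LinearMap.snd_surjective, LinearMap.range_inl ℤ B A⟩
  have hs₂ : ∀ a, (s a).2 = a := LinearMap.congr_fun hsec
  refine ⟨-(LinearMap.fst ℤ B A ∘ₗ s), fun g => LinearMap.ext fun a => ?_⟩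
  have h₁ := congrArg Prod.fst (hs g (ρA g⁻¹ a))
  simp only [cocycleExtension_apply, hs₂, self_inv_apply] at h₁
  simp [linHom_apply, h₁]

theorem ext1Vanishes_of_h1Vanishes_linHom [Module.Projective ℤ A]
    (h : (linHom ρA ρB).H1Vanishes) : Ext1Vanishes ρA ρB := by
  intro E _ _ ρE ι π ⟨hι, hπ, hinj, hsurj, hexact⟩
  obtain ⟨s₀, hs₀⟩ := π.exists_rightInverse_of_surjective (LinearMap.range_eq_top.2 hsurj)
  have hs₀' : ∀ a, π (s₀ a) = a := LinearMap.congr_fun hs₀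
  -- the failure of `s₀` to be equivariant takes values in `B`
  have hdefect : ∀ g, ∃ c : A →ₗ[ℤ] B, ι ∘ₗ c = linHom ρA ρE g s₀ - s₀ := fun g =>
    Module.Projective.exists_comp_eq_of_range_le <| by
      rintro _ ⟨a, rfl⟩
      rw [hexact, LinearMap.mem_ker]
      simp [linHom_apply, hπ _ _, hs₀']
  choose c hc using hdefect
  obtain ⟨m, hm⟩ := h c <| IsOneCocycle.of_comp (isIntertwiningMap_llcomp ⟨hι⟩)
    (fun f f' hff' => LinearMap.ext fun a => hinj (LinearMap.congr_fun hff' a))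
    (by rw [show ⇑(LinearMap.llcomp ℤ A B E ι) ∘ c = _ from funext hc]
        exact isOneCocycle_coboundary _ s₀)
  refine ⟨s₀ - ι ∘ₗ m, fun g a => ?_, ?_⟩
  · have h₁ := LinearMap.congr_fun (hc g) (ρA g a)
    simp only [hm g, LinearMap.comp_apply, LinearMap.sub_apply, linHom_apply, inv_self_apply,
      map_sub] at h₁
    rw [LinearMap.sub_apply, LinearMap.sub_apply, map_sub, LinearMap.comp_apply,
      LinearMap.comp_apply, ← hι]
    linear_combination (norm := module) h₁
  · have hπι : π ∘ₗ ι = 0 :=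
      LinearMap.ext fun b =>
        (LinearMap.mem_ker (f := π)).1 (hexact ▸ LinearMap.mem_range_self ι b)
    rw [LinearMap.comp_sub, hs₀, ← LinearMap.comp_assoc, hπι, LinearMap.zero_comp, sub_zero]

end Ext

namespace GammaLattice

theorem IsPermutation.exists_basis_smul {N : GammaLattice Γ} (hN : N.IsPermutation) :
    ∃ (ι : Type) (_ : MulAction Γ ι) (b : Module.Basis ι ℤ N.carrier),
      ∀ g i, N.ρ g (b i) = b (g • i) := by
  obtain ⟨ι, b, hb⟩ := hN
  choose σ hσ using hb
  let _ : MulAction Γ ι :=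
    { smul := σ
      one_smul := fun i => b.injective <| by
        change b (σ 1 i) = b i
        rw [← hσ, map_one, Module.End.one_apply]
      mul_smul := fun g h i => b.injective <| by
        change b (σ (g * h) i) = b (σ g (σ h i))
        rw [← hσ, ← hσ, ← hσ, map_mul, Module.End.mul_apply] }
  exact ⟨ι, inferInstance, b, hσ⟩

theorem IsPermutation.isInvertible {N : GammaLattice Γ} (hN : N.IsPermutation) :
    N.IsInvertible :=
  ⟨N, hN, LinearMap.id, LinearMap.id, fun _ _ => rfl, fun _ _ => rfl, rfl⟩

variable (Γ) in
noncomputable def ofMulAction (X : Type) [MulAction Γ X] [Finite X] : GammaLattice Γ where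
  carrier := X → ℤ
  isModule := Pi.module X (fun _ => ℤ) ℤ
  ρ := (trivial ℤ Γ ℤ).onFunctions X
  free := inferInstance
  finite := inferInstance

theorem ofMulAction_ρ_single {X : Type} [MulAction Γ X] [Finite X] (g : Γ) (x : X) :
    (ofMulAction Γ X).ρ g (Pi.basisFun ℤ X x) = Pi.basisFun ℤ X (g • x) := by
  classical
  funext y
  change Pi.single (M := fun _ => ℤ) x 1 (g⁻¹ • y) = Pi.single (M := fun _ => ℤ) (g • x) 1 y
  simp only [Pi.single_apply, inv_smul_eq_iff, @eq_comm _ y]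

theorem isPermutation_ofMulAction (X : Type) [MulAction Γ X] [Finite X] :
    (ofMulAction Γ X).IsPermutation :=
  ⟨X, Pi.basisFun ℤ X, fun g x => ⟨g • x, ofMulAction_ρ_single g x⟩⟩

variable {F : GammaLattice Γ}

theorem IsFlasque.h1Vanishes_linHom_of_isPermutation (hF : F.IsFlasque) {N : GammaLattice Γ}
    (hN : N.IsPermutation) : (linHom F.ρ N.ρ).H1Vanishes := by
  obtain ⟨ι, _, b, hb⟩ := hN.exists_basis_smul
  have := N.finite
  have : Finite ι := Module.Finite.finite_basis b
  rw [h1Vanishes_congr (linHomEquivOnFunctions F.ρ hb)]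
  exact h1Vanishes_onFunctions fun x => (subsingleton_H1_iff_h1Vanishes _).1 (hF _)

theorem IsFlasque.h1Vanishes_linHom_of_isInvertible (hF : F.IsFlasque) {Q : GammaLattice Γ}
    (hQ : Q.IsInvertible) : (linHom F.ρ Q.ρ).H1Vanishes := by
  obtain ⟨N, hN, i, p, hi, hp, hpi⟩ := hQ
  exact (hF.h1Vanishes_linHom_of_isPermutation hN).of_retract (isIntertwiningMap_llcomp ⟨hi⟩)
    (isIntertwiningMap_llcomp ⟨hp⟩) fun f => LinearMap.ext fun a => LinearMap.congr_fun hpi (f a)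

end GammaLattice

open GammaLattice

/-- A Γ-lattice `F` is flasque if and only if
`Ext¹_Γ(F, Q) = 0` for every invertible Γ-lattice `Q`. -/
theorem flasque_iff_ext1_invertible_vanishes
    {Γ : Type} [Group Γ] [Finite Γ] (F : GammaLattice Γ) :
    F.IsFlasque ↔
      ∀ Q : GammaLattice Γ, Q.IsInvertible → Ext1Vanishes F.ρ Q.ρ := by
  have := F.free
  refine ⟨fun hF Q hQ => ext1Vanishes_of_h1Vanishes_linHom
    (hF.h1Vanishes_linHom_of_isInvertible hQ), fun h S => ?_⟩
  rw [subsingleton_H1_iff_h1Vanishes]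
  refine h1Vanishes_comp_subtype_of_onFunctions
    ((h1Vanishes_congr (linHomEquivOnFunctions F.ρ ofMulAction_ρ_single)).1 ?_)
  exact h1Vanishes_linHom_of_ext1Vanishes (h _ (isPermutation_ofMulAction (Γ ⧸ S)).isInvertible)
end

section
/- Let Γ be a finite group and M a Γ-lattice. Suppose 0 → M →^β P → F → 0 is a short exact sequence of Γ-lattices with P permutation and F flasque (a flasque resolution of the first type). Then for every invertible Γ-lattice P' and every ℤ[Γ]-module homomorphism f : M → P' there exists a ℤ[Γ]-module homomorphism g : P → P' with g ∘ β = f. -/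
variable {Γ : Type} [Group Γ]

/-!
Because `F` is `ℤ`-free, `0 → M → P → F → 0` splits over `ℤ`, so restriction
`Hom(P, P') → Hom(M, P')` is onto with kernel `Hom(F, P')`; the obstruction to lifting an
equivariant `f` to an equivariant `g` is therefore a class in `H¹(Γ, Hom(F, P'))`. This group
vanishes: `P'` is a direct summand of a permutation lattice `N ≅ ⊕ ℤ[Γ/Γᵢ]`, and by Shapiro's
lemma `H¹(Γ, Hom(F, N))` is a product of the groups `H¹(Γᵢ, F^∨)`, which vanish since `F` is
flasque.
-/

open CategoryTheory groupCohomology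

theorem MulAction.exists_orbit_representatives (G ι : Type) [Group G] [MulAction G ι] :
    ∃ r : ι → ι, (∀ (g : G) j, r (g • j) = r j) ∧ ∀ j, ∃ t : G, t • r j = j := by
  refine ⟨fun j => (Quotient.mk (orbitRel G ι) j).out, fun g j => ?_, fun j => ?_⟩
  · exact congrArg Quotient.out (Quotient.sound (mem_orbit j g))
  · exact mem_orbit_symm.1 (Quotient.mk_out (s := orbitRel G ι) j)

namespace Representation

variable {k G V W U : Type} [CommRing k] [Group G] [AddCommGroup V] [Module k V]
  [AddCommGroup W] [Module k W] [AddCommGroup U] [Module k U]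

theorem subsingleton_H1_iff (ρ : Representation k G V) :
    Subsingleton (H1 (Rep.of ρ)) ↔
      ∀ u : G → V, (∀ g h, u (g * h) = ρ g (u h) + u g) → ∃ x, ∀ g, ρ g x - x = u g := by
  constructor
  · intro _ u hu
    have hmem : u ∈ cocycles₁ (Rep.of ρ) := by rwa [mem_cocycles₁_iff]
    obtain ⟨x, hx⟩ := (H1π_eq_zero_iff (⟨u, hmem⟩ : cocycles₁ (Rep.of ρ))).1
      (Subsingleton.elim _ _)
    exact ⟨x, congrFun hx⟩
  · intro h
    refine subsingleton_of_forall_eq 0 fun z => ?_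
    induction z using H1_induction_on with | h u =>
    obtain ⟨x, hx⟩ := h u ((mem_cocycles₁_iff u).1 u.2)
    exact (H1π_eq_zero_iff u).2 ⟨x, funext hx⟩

theorem subsingleton_H1_of_retract {ρ : Representation k G V} {σ : Representation k G W}
    (i : ρ.IntertwiningMap σ) (p : σ.IntertwiningMap ρ) (hpi : p.comp i = .id ρ)
    [Subsingleton (H1 (Rep.of σ))] : Subsingleton (H1 (Rep.of ρ)) := by
  have hleft : Function.LeftInverse (map (MonoidHom.id G) (Rep.ofHom p) 1)
      (map (MonoidHom.id G) (Rep.ofHom i) 1) := fun x => by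
    rw [← ModuleCat.comp_apply, ← map_id_comp, ← Rep.ofHom_comp, hpi,
      show Rep.ofHom (IntertwiningMap.id ρ) = 𝟙 (Rep.of ρ) from rfl, map_id]
    rfl
  exact hleft.injective.subsingleton

theorem subsingleton_H1_of_equiv {ρ : Representation k G V} {σ : Representation k G W}
    (e : ρ.Equiv σ) [Subsingleton (H1 (Rep.of σ))] : Subsingleton (H1 (Rep.of ρ)) :=
  subsingleton_H1_of_retract e.toIntertwiningMap e.symm.toIntertwiningMap
    (by ext; exact e.symm_apply_apply _)

/-- On a single orbit `ι ≅ G ⧸ H` this is the representation coinduced from `ρ|_H`, so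
`subsingleton_H1_permPi` is an instance of Shapiro's lemma. -/
def permPi (ρ : Representation k G V) (ι : Type) [MulAction G ι] :
    Representation k G (ι → V) where
  toFun g := LinearMap.pi fun j => ρ g ∘ₗ LinearMap.proj (g⁻¹ • j)
  map_one' := by ext; simp
  map_mul' g h := by ext; simp [mul_smul]

@[simp]
theorem permPi_apply (ρ : Representation k G V) {ι : Type} [MulAction G ι] (g : G)
    (w : ι → V) (j : ι) : permPi ρ ι g w j = ρ g (w (g⁻¹ • j)) := rfl

theorem subsingleton_H1_permPi (ρ : Representation k G V) (ι : Type) [MulAction G ι]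
    (hρ : ∀ i : ι, Subsingleton (H1 (Rep.of (ρ.comp (MulAction.stabilizer G i).subtype)))) :
    Subsingleton (H1 (Rep.of (permPi ρ ι))) := by
  rw [subsingleton_H1_iff]
  intro c hc
  have hcocycle : ∀ g h j, c (g * h) j = ρ g (c h (g⁻¹ • j)) + c g j :=
    fun g h j => congrFun (hc g h) j
  have hstab : ∀ i, ∃ φ : V, ∀ h ∈ MulAction.stabilizer G i, ρ h φ - φ = c h i := by
    intro i
    obtain ⟨φ, hφ⟩ := (subsingleton_H1_iff _).1 (hρ i) (fun h => c h i) fun g h => by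
      simp [hcocycle, MulAction.mem_stabilizer_iff.1 (inv_mem g.2)]
    exact ⟨φ, fun h hh => hφ ⟨h, hh⟩⟩
  choose φ hφ using hstab
  -- `ρ g (φ i) - c g (g • i)` depends only on `g • i`; it is the coboundary's value there.
  have hindep : ∀ i (g g' : G), g • i = g' • i →
      ρ g (φ i) - c g (g • i) = ρ g' (φ i) - c g' (g' • i) := by
    intro i g g' hgg'
    have hmem : g⁻¹ * g' ∈ MulAction.stabilizer G i := by
      rw [MulAction.mem_stabilizer_iff, mul_smul, ← hgg', inv_smul_smul]
    have hsplit := hcocycle g (g⁻¹ * g') (g' • i)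
    rw [mul_inv_cancel_left, ← hgg', inv_smul_smul, ← hφ i _ hmem] at hsplit
    rw [← hgg', hsplit, map_sub, ← Module.End.mul_apply, ← map_mul, mul_inv_cancel_left]
    abel
  obtain ⟨r, hr, ht⟩ := MulAction.exists_orbit_representatives G ι
  choose t ht using ht
  refine ⟨fun j => ρ (t j) (φ (r j)) - c (t j) j, fun g => funext fun j => ?_⟩
  have hrj : r (g⁻¹ • j) = r j := hr _ _
  have hj : (g * t (g⁻¹ • j)) • r j = j := by rw [mul_smul, ← hrj, ht, smul_inv_smul]
  have hx := hindep (r j) (t j) (g * t (g⁻¹ • j)) (by rw [ht, hj])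
  rw [ht, hj] at hx
  simp only [Pi.sub_apply, permPi_apply, hx, hcocycle, map_mul, Module.End.mul_apply, hrj,
    map_sub]
  abel

section PermutationBasis

variable {ι : Type} [MulAction G ι] {ρ : Representation k G V} {σ : Representation k G W}
  {b : Module.Basis ι k W}

theorem coord_comp_eq_coord_inv_smul (hb : ∀ g i, σ g (b i) = b (g • i)) (g : G) (j : ι) :
    b.coord j ∘ₗ σ g = b.coord (g⁻¹ • j) :=
  b.ext fun i => by
    classical
    simp only [LinearMap.comp_apply, hb, Module.Basis.coord_apply, Module.Basis.repr_self,
      Finsupp.single_apply, eq_inv_smul_iff]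

noncomputable def linHomEquivPermPi [Fintype ι] (hb : ∀ g i, σ g (b i) = b (g • i)) :
    (linHom ρ σ).Equiv (permPi ρ.dual ι) :=
  .mk
    { toFun := fun φ j => b.coord j ∘ₗ φ
      map_add' := fun φ ψ => by ext; simp
      map_smul' := fun c φ => by ext; simp
      invFun := fun w => ∑ j, (w j).smulRight (b j)
      left_inv := fun φ => by ext x; simp [b.sum_repr]
      right_inv := fun w => by classical ext j x; simp [Finsupp.single_apply] }
    fun g => by
      ext φ j x
      simp [← LinearMap.comp_apply (b.coord j), coord_comp_eq_coord_inv_smul hb, dual_apply,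
        Module.Dual.transpose_apply]

theorem subsingleton_H1_linHom_of_permutes [Finite ι] (hb : ∀ g i, σ g (b i) = b (g • i))
    (hρ : ∀ i : ι,
      Subsingleton (H1 (Rep.of (ρ.dual.comp (MulAction.stabilizer G i).subtype)))) :
    Subsingleton (H1 (Rep.of (linHom ρ σ))) := by
  have := Fintype.ofFinite ι
  have := subsingleton_H1_permPi ρ.dual ι hρ
  exact subsingleton_H1_of_equiv (linHomEquivPermPi hb)

end PermutationBasis

namespace IntertwiningMap

variable {ρ : Representation k G V} {σ : Representation k G W}

def lcomp (τ : Representation k G U) (f : ρ.IntertwiningMap σ) :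
    (linHom σ τ).IntertwiningMap (linHom ρ τ) :=
  (LinearMap.lcomp k U f.toLinearMap).intertwiningMap_of_isIntertwiningMap _ _ fun g φ => by
    ext v
    simp [f.isIntertwining]

def compRight (τ : Representation k G U) (f : ρ.IntertwiningMap σ) :
    (linHom τ ρ).IntertwiningMap (linHom τ σ) :=
  (f.toLinearMap.compRight (M := U) (S := k)).intertwiningMap_of_isIntertwiningMap _ _
    fun g φ => by
      ext v
      simp [f.isIntertwining]

end IntertwiningMap

theorem subsingleton_H1_linHom_of_retract {ρ : Representation k G V}
    {σ : Representation k G W} {τ : Representation k G U} (i : σ.IntertwiningMap τ)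
    (p : τ.IntertwiningMap σ) (hpi : p.comp i = .id σ)
    [Subsingleton (H1 (Rep.of (linHom ρ τ)))] : Subsingleton (H1 (Rep.of (linHom ρ σ))) :=
  subsingleton_H1_of_retract (IntertwiningMap.compRight ρ i) (IntertwiningMap.compRight ρ p)
    (by ext φ x; exact congr($hpi (φ x)))

theorem surjOn_invariants_of_subsingleton_H1 {ρ : Representation k G V}
    {σ : Representation k G W} {τ : Representation k G U} (j : τ.IntertwiningMap ρ)
    (R : ρ.IntertwiningMap σ) (hj : Function.Injective j) (hR : Function.Surjective R)
    (hexact : Function.Exact j R) [Subsingleton (H1 (Rep.of τ))] :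
    Set.SurjOn R ρ.invariants σ.invariants := by
  intro b hb
  obtain ⟨a₀, rfl⟩ := hR b
  have hdefect : ∀ g, ∃ c, j c = ρ g a₀ - a₀ := fun g =>
    (hexact _).1 (by rw [map_sub, R.isIntertwining, hb g, sub_self])
  choose c hc using hdefect
  have hcocycle : ∀ g h, c (g * h) = τ g (c h) + c g := fun g h => hj <| by
    rw [map_add, j.isIntertwining, hc, hc, hc, map_mul, Module.End.mul_apply, map_sub]
    abel
  obtain ⟨x, hx⟩ := (subsingleton_H1_iff τ).1 ‹_› c hcocycle
  refine ⟨a₀ - j x, fun g => ?_, by rw [map_sub, (hexact _).2 ⟨x, rfl⟩, sub_zero]⟩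
  have hjx := congrArg j (hx g)
  rw [map_sub, j.isIntertwining, hc] at hjx
  rw [map_sub, sub_eq_sub_iff_sub_eq_sub, ← hjx]

theorem exists_isIntertwiningMap_comp_eq {A B C : Type} [AddCommGroup A] [Module k A]
    [AddCommGroup B] [Module k B] [AddCommGroup C] [Module k C] [Module.Projective k C]
    {ρA : Representation k G A} {ρB : Representation k G B} {ρC : Representation k G C}
    {ρW : Representation k G W} {β : A →ₗ[k] B} {π : B →ₗ[k] C}
    (hβ : ρA.IsIntertwiningMap ρB β) (hπ : ρB.IsIntertwiningMap ρC π)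
    (hβinj : Function.Injective β) (hπsurj : Function.Surjective π)
    (hexact : Function.Exact β π) [Subsingleton (H1 (Rep.of (linHom ρC ρW)))]
    {f : A →ₗ[k] W} (hf : ρA.IsIntertwiningMap ρW f) :
    ∃ g : B →ₗ[k] W, ρB.IsIntertwiningMap ρW g ∧ g ∘ₗ β = f := by
  obtain ⟨r, hr⟩ := ((hexact.split_tfae hβinj hπsurj).out 0 1).1
    (π.exists_rightInverse_of_surjective (LinearMap.range_eq_top.2 hπsurj))
  obtain ⟨g, hg, hgf⟩ := surjOn_invariants_of_subsingleton_H1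
    (IntertwiningMap.lcomp ρW (π.intertwiningMap_of_isIntertwiningMap _ _ hπ.isIntertwining))
    (IntertwiningMap.lcomp ρW (β.intertwiningMap_of_isIntertwiningMap _ _ hβ.isIntertwining))
    (LinearMap.lcomp_injective_of_surjective _ hπsurj)
    (fun f => ⟨f ∘ₗ r, show (f ∘ₗ r) ∘ₗ β = f by
      rw [LinearMap.comp_assoc, hr, LinearMap.comp_id]⟩)
    (LinearMap.exact_lcomp_of_exact_of_surjective _ hexact hπsurj)
    ((mem_linHom_invariants_iff_isIntertwining f).2 hf)
  exact ⟨g, (mem_linHom_invariants_iff_isIntertwining g).1 hg, hgf⟩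

end Representation

theorem GammaLattice.IsPermutation.exists_mulAction {L : GammaLattice Γ}
    (hL : L.IsPermutation) :
    ∃ (ι : Type) (_ : MulAction Γ ι) (_ : Finite ι) (b : Module.Basis ι ℤ L.carrier),
      ∀ g i, L.ρ g (b i) = b (g • i) := by
  obtain ⟨ι, b, hb⟩ := hL
  choose σ hσ using hb
  let : MulAction Γ ι :=
    { smul := σ
      one_smul := fun i => b.injective <|
        (hσ 1 i).symm.trans (by rw [map_one, Module.End.one_apply])
      mul_smul := fun g h i => b.injective <|
        (hσ (g * h) i).symm.trans (by rw [map_mul, Module.End.mul_apply, hσ, hσ]; rfl) }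
  have := L.finite
  exact ⟨ι, inferInstance, Module.Finite.finite_basis b, b, hσ⟩

theorem flasque_resolution_first_type_versal_general
    {Γ : Type} [Group Γ]
    (M P F : GammaLattice Γ) (hF : F.IsFlasque)
    (β : M.carrier →ₗ[ℤ] P.carrier) (π : P.carrier →ₗ[ℤ] F.carrier)
    (hse : IsShortExactSeq M.ρ P.ρ F.ρ β π)
    (P' : GammaLattice Γ) (hP' : P'.IsInvertible)
    (f : M.carrier →ₗ[ℤ] P'.carrier) (hf : IsEquivariantMap M.ρ P'.ρ f) :
    ∃ g : P.carrier →ₗ[ℤ] P'.carrier,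
      IsEquivariantMap P.ρ P'.ρ g ∧ g.comp β = f := by
  obtain ⟨hβ, hπ, hβinj, hπsurj, hexact⟩ := hse
  obtain ⟨N, hN, i, p, hi, hp, hpi⟩ := hP'
  obtain ⟨ι, _, _, b, hb⟩ := hN.exists_mulAction
  have := F.free
  -- No type ascriptions: written out over `ℤ`, `Rep.of (linHom F.ρ N.ρ)` would elaborate with
  -- `AddCommGroup.toIntModule` instead of the `LinearMap.module` the lemmas produce.
  have := Representation.subsingleton_H1_linHom_of_permutes (ρ := F.ρ) hb fun j => hF _
  have := Representation.subsingleton_H1_linHom_of_retract (ρ := F.ρ)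
    (i.intertwiningMap_of_isIntertwiningMap _ _ hi)
    (p.intertwiningMap_of_isIntertwiningMap _ _ hp) (by ext x; exact congr($hpi x))
  obtain ⟨g, hg, hgβ⟩ := Representation.exists_isIntertwiningMap_comp_eq ⟨hβ⟩ ⟨hπ⟩ hβinj
    hπsurj (LinearMap.exact_iff.2 hexact.symm) ⟨hf⟩
  exact ⟨g, hg.isIntertwining, hgβ⟩

/-- versality of flasque resolutions of the first type:
given `0 → M →[β] P → F → 0` with `P` permutation and `F` flasque,
any map from `M` to an invertible lattice `P'` factors through `β`. -/
theorem flasque_resolution_first_type_versal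
    {Γ : Type} [Group Γ] [Finite Γ]
    (M P F : GammaLattice Γ) (hP : P.IsPermutation) (hF : F.IsFlasque)
    (β : M.carrier →ₗ[ℤ] P.carrier) (π : P.carrier →ₗ[ℤ] F.carrier)
    (hse : IsShortExactSeq M.ρ P.ρ F.ρ β π)
    (P' : GammaLattice Γ) (hP' : P'.IsInvertible)
    (f : M.carrier →ₗ[ℤ] P'.carrier) (hf : IsEquivariantMap M.ρ P'.ρ f) :
    ∃ g : P.carrier →ₗ[ℤ] P'.carrier,
      IsEquivariantMap P.ρ P'.ρ g ∧ g.comp β = f :=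
  flasque_resolution_first_type_versal_general M P F hF β π hse P' hP' f hf
end

section
/- Let Γ be a finite group. For every Γ-lattice M there exists a short exact sequence of Γ-lattices 0 → P → F → M → 0 in which P is a permutation Γ-lattice and F is a flasque Γ-lattice (a flasque resolution of M of the second type exists). -/
variable {Γ : Type} [Group Γ]

/-! Dualising, it suffices to embed `N = M^∨` into a coflasque lattice `E` whose cokernel `P` is a
permutation lattice: `0 → P^∨ → E^∨ → M → 0` stays exact because `P` is free, and `E^∨` is flasque
because `E^∨∨ ≅ E`. Embed `N` into the permutation lattice `P₁ = ℤ[J × Γ]`, `J` indexing a basis,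
set `X = P₁ / N`, and let `P₂` be a permutation lattice mapping onto `X^H` for every subgroup `H`
(a copy of `ℤ[Γ / H]` for each generator of `X^H`). Then `E = P₁ ×_X P₂` contains `N` with
cokernel `P₂`. A cocycle of `E` loses its `P₁`-component since `H¹(H, P₁) = 0`; what is left is a
cocycle of `P₂` with values in `ker (P₂ → X)`, hence a coboundary `δp` where `p` maps into `X^H`,
and correcting `p` by an `H`-invariant preimage shows that it comes from `E`. Permutation lattices
have no `H¹`: `|H| • c = δ(-∑ c)`, and orbitwise this can be divided by `|H|`. -/

universe u

namespace LinearMap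

section Pullback

variable {k V₀ V₁ V₂ X : Type*} [CommRing k] [AddCommGroup V₀] [Module k V₀]
  [AddCommGroup V₁] [Module k V₁] [AddCommGroup V₂] [Module k V₂] [AddCommGroup X] [Module k X]

def pullback (f₁ : V₁ →ₗ[k] X) (f₂ : V₂ →ₗ[k] X) : Submodule k (V₁ × V₂) :=
  eqLocus (f₁ ∘ₗ fst k V₁ V₂) (f₂ ∘ₗ snd k V₁ V₂)

theorem mem_pullback {f₁ : V₁ →ₗ[k] X} {f₂ : V₂ →ₗ[k] X} {x : V₁ × V₂} :
    x ∈ pullback f₁ f₂ ↔ f₁ x.1 = f₂ x.2 :=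
  Iff.rfl

def pullbackSnd (f₁ : V₁ →ₗ[k] X) (f₂ : V₂ →ₗ[k] X) : pullback f₁ f₂ →ₗ[k] V₂ :=
  snd k V₁ V₂ ∘ₗ (pullback f₁ f₂).subtype

def pullbackInl {f₁ : V₁ →ₗ[k] X} (f₂ : V₂ →ₗ[k] X) (ψ : V₀ →ₗ[k] V₁) (hψ : f₁ ∘ₗ ψ = 0) :
    V₀ →ₗ[k] pullback f₁ f₂ :=
  codRestrict _ (inl k V₁ V₂ ∘ₗ ψ) fun v => by simp [mem_pullback, ← comp_apply, hψ]

theorem pullbackInl_injective {f₁ : V₁ →ₗ[k] X} (f₂ : V₂ →ₗ[k] X) {ψ : V₀ →ₗ[k] V₁}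
    (hψ : f₁ ∘ₗ ψ = 0) (hinj : Function.Injective ψ) :
    Function.Injective (pullbackInl f₂ ψ hψ) :=
  fun _ _ h => hinj (congrArg (fun e : pullback f₁ f₂ => e.1.1) h)

theorem pullbackSnd_surjective {f₁ : V₁ →ₗ[k] X} (f₂ : V₂ →ₗ[k] X)
    (hf₁ : Function.Surjective f₁) : Function.Surjective (pullbackSnd f₁ f₂) := fun p =>
  let ⟨v, hv⟩ := hf₁ (f₂ p)
  ⟨⟨(v, p), hv⟩, rfl⟩

theorem exact_pullbackInl_pullbackSnd {f₁ : V₁ →ₗ[k] X} (f₂ : V₂ →ₗ[k] X) {ψ : V₀ →ₗ[k] V₁}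
    (hψ : Function.Exact ψ f₁) :
    Function.Exact (pullbackInl f₂ ψ hψ.linearMap_comp_eq_zero) (pullbackSnd f₁ f₂) := by
  rintro ⟨⟨v, p⟩, hvp⟩
  change p = 0 ↔ _
  constructor
  · rintro rfl
    obtain ⟨u, rfl⟩ := (hψ v).1 (by simpa [mem_pullback] using hvp)
    exact ⟨u, rfl⟩
  · rintro ⟨u, hu⟩
    exact (congrArg (fun e : pullback f₁ f₂ => e.1.2) hu).symm

end Pullback

end LinearMap

namespace Representation

section Cocycles

variable {k G V W : Type*} [CommRing k] [Group G] [AddCommGroup V] [Module k V]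
  [AddCommGroup W] [Module k W]

def CocyclesAreCoboundaries (ρ : Representation k G V) : Prop :=
  ∀ c : G → V, (∀ g h, c (g * h) = ρ g (c h) + c g) → ∃ x, ∀ g, c g = ρ g x - x

theorem CocyclesAreCoboundaries.of_equiv {ρ : Representation k G V} {σ : Representation k G W}
    (e : ρ.Equiv σ) (h : ρ.CocyclesAreCoboundaries) : σ.CocyclesAreCoboundaries := by
  have he := e.toIntertwiningMap.isIntertwining
  have he' := e.symm.toIntertwiningMap.isIntertwining
  simp only [Equiv.coe_toIntertwiningMap] at he he'
  intro c hc
  obtain ⟨x, hx⟩ := h (fun g => e.symm (c g)) fun g g' => by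
    rw [hc, map_add, he']
  refine ⟨e x, fun g => ?_⟩
  rw [← he, ← map_sub, ← hx, Equiv.apply_symm_apply]

end Cocycles

theorem subsingleton_H1_iff_s13 {k G V : Type u} [CommRing k] [Group G] [AddCommGroup V]
    [Module k V] (ρ : Representation k G V) :
    Subsingleton (groupCohomology.H1 (Rep.of ρ)) ↔ ρ.CocyclesAreCoboundaries := by
  have coboundary_iff (c : groupCohomology.cocycles₁ (Rep.of ρ)) :
      ⇑c ∈ groupCohomology.coboundaries₁ (Rep.of ρ) ↔ ∃ x, ∀ g, c g = ρ g x - x :=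
    ⟨fun ⟨x, hx⟩ => ⟨x, fun g => (congrFun hx g).symm⟩,
      fun ⟨x, hx⟩ => ⟨x, funext fun g => (hx g).symm⟩⟩
  constructor
  · intro _ c hc
    let z : groupCohomology.cocycles₁ (Rep.of ρ) :=
      ⟨c, (groupCohomology.mem_cocycles₁_iff (A := Rep.of ρ) c).2 hc⟩
    exact (coboundary_iff z).1 ((groupCohomology.H1π_eq_zero_iff z).1 (Subsingleton.elim _ _))
  · intro h
    have hπ (c : groupCohomology.cocycles₁ (Rep.of ρ)) : groupCohomology.H1π (Rep.of ρ) c = 0 :=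
      (groupCohomology.H1π_eq_zero_iff c).2
        ((coboundary_iff c).2 (h c ((groupCohomology.mem_cocycles₁_iff c).1 c.2)))
    refine ⟨fun a b => ?_⟩
    induction a using groupCohomology.H1_induction_on
    induction b using groupCohomology.H1_induction_on
    rw [hπ, hπ]

section Permutation

variable (k G α : Type*) [CommRing k] [Group G] [MulAction G α]

noncomputable def ofMulActionFinsupp : Representation k G (α →₀ k) where
  toFun g := (Finsupp.domLCongr (MulAction.toPerm g : α ≃ α)).toLinearMap
  map_one' := by ext; simp
  map_mul' g h := by ext; simp [mul_smul]

variable {k G α}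

@[simp]
theorem ofMulActionFinsupp_single (g : G) (a : α) (r : k) :
    ofMulActionFinsupp k G α g (Finsupp.single a r) = Finsupp.single (g • a) r := by
  simp [ofMulActionFinsupp]

theorem ofMulActionFinsupp_apply (g : G) (f : α →₀ k) (a : α) :
    ofMulActionFinsupp k G α g f a = f (g⁻¹ • a) := by
  simp [ofMulActionFinsupp]

end Permutation

section Averaging

variable {k G V : Type*} [CommRing k] [Group G] [Fintype G] [AddCommGroup V] [Module k V]

theorem card_smul_cocycle_eq (ρ : Representation k G V) {c : G → V}
    (hc : ∀ g h, c (g * h) = ρ g (c h) + c g) (g : G) :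
    Fintype.card G • c g = ∑ h, c h - ρ g (∑ h, c h) := by
  have hsum : ∑ h, c (g * h) = ∑ h, c h := Equiv.sum_comp (Equiv.mulLeft g) c
  simp only [hc, Finset.sum_add_distrib, ← map_sum, Finset.sum_const, Finset.card_univ] at hsum
  exact eq_sub_of_add_eq' hsum

end Averaging

theorem ofMulActionFinsupp_cocyclesAreCoboundaries (k G α : Type*) [CommRing k]
    [IsAddTorsionFree k] [Group G] [Finite G] [MulAction G α] :
    (ofMulActionFinsupp k G α).CocyclesAreCoboundaries := by
  intro c hc
  have := Fintype.ofFinite G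
  set y := ∑ h, c h
  have hcard (g : G) : Fintype.card G • c g = y - ofMulActionFinsupp k G α g y :=
    card_smul_cocycle_eq _ hc g
  let r (a : α) : α := (Quotient.mk (MulAction.orbitRel G α) a).out
  have hr (g : G) (a : α) : r (g • a) = r a :=
    congrArg Quotient.out (Quotient.sound (MulAction.mem_orbit a g))
  choose σ hσ using fun a => MulAction.mem_orbit_iff.1
    (MulAction.mem_orbit_symm.1 (Quotient.mk_out (s := MulAction.orbitRel G α) a))
  have hsupp : (Function.support fun a => -c (σ a) a).Finite :=
    (Set.finite_iUnion fun g => (c g).hasFiniteSupport).subset fun a ha =>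
      Set.mem_iUnion.2 ⟨σ a, by simpa using ha⟩
  let x := Finsupp.ofSupportFinite _ hsupp
  have hx (a : α) : Fintype.card G • x a = y (r a) - y a := by
    have h := congrArg (· a) (hcard (σ a))
    rw [Finsupp.smul_apply, Finsupp.sub_apply, ofMulActionFinsupp_apply,
      inv_smul_eq_iff.2 (hσ a).symm] at h
    rw [Finsupp.ofSupportFinite_coe, smul_neg, h, neg_sub]
  refine ⟨x, fun g => Finsupp.ext fun a =>
    nsmul_right_injective (Fintype.card_ne_zero (α := G)) ?_⟩
  have h := congrArg (· a) (hcard g)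
  rw [Finsupp.smul_apply, Finsupp.sub_apply, ofMulActionFinsupp_apply] at h
  change _ • _ = _ • _
  rw [h, Finsupp.sub_apply, ofMulActionFinsupp_apply, smul_sub, hx, hx, hr]
  abel

theorem exists_injective_intertwiningMap_ofMulActionFinsupp {k G V J : Type*} [CommRing k]
    [Group G] [Finite G] [Finite J] [AddCommGroup V] [Module k V] (ρ : Representation k G V)
    (b : Module.Basis J k V) :
    ∃ ψ : V →ₗ[k] ((Σ _ : J, G) →₀ k),
      IsIntertwiningMap ρ (ofMulActionFinsupp k G _) ψ ∧ Function.Injective ψ := by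
  let ψ := (Finsupp.linearEquivFunOnFinite k k (Σ _ : J, G)).symm.toLinearMap ∘ₗ
    LinearMap.pi fun a => b.coord a.1 ∘ₗ ρ a.2⁻¹
  have hψ (v : V) (j : J) (γ : G) : ψ v ⟨j, γ⟩ = b.coord j (ρ γ⁻¹ v) := rfl
  refine ⟨ψ, ⟨fun g v => Finsupp.ext fun ⟨j, γ⟩ => ?_⟩, fun v w hvw => b.ext_elem fun j => ?_⟩
  · rw [ofMulActionFinsupp_apply, Sigma.smul_mk, hψ, hψ, smul_eq_mul, mul_inv_rev, inv_inv,
      map_mul, Module.End.mul_apply]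
  · simpa [hψ] using congrArg (· ⟨j, 1⟩) hvw

section Cover

variable {k : Type*} {G X : Type u} [CommRing k] [Group G] [AddCommGroup X] [Module k X]

theorem isIntertwiningMap_linearCombination {α : Type*} [MulAction G α]
    (ρ : Representation k G X) {v : α → X} (hv : ∀ (g : G) a, v (g • a) = ρ g (v a)) :
    IsIntertwiningMap (ofMulActionFinsupp k G α) ρ (Finsupp.linearCombination k v) := by
  refine ⟨fun g f => ?_⟩
  induction f using Finsupp.induction_linear with
  | zero => simp
  | add f f' hf hf' => simp only [map_add, hf, hf']
  | single a r => simp [hv]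

theorem exists_ofMulActionFinsupp_surjective_on_invariants [Finite G] [IsNoetherian k X]
    (ρ : Representation k G X) :
    ∃ (α : Type u) (_ : MulAction G α) (_ : Finite α) (q : (α →₀ k) →ₗ[k] X),
      IsIntertwiningMap (ofMulActionFinsupp k G α) ρ q ∧ Function.Surjective q ∧
      ∀ H : Subgroup G, invariants (ρ.comp H.subtype) ≤
        (invariants ((ofMulActionFinsupp k G α).comp H.subtype)).map q := by
  choose S hS using fun H : Subgroup G => IsNoetherian.noetherian (invariants (ρ.comp H.subtype))
  have hS_fixed (H : Subgroup G) (s : S H) (h : H) : ρ h s = s :=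
    (hS H ▸ Submodule.subset_span s.2 : (s : X) ∈ invariants (ρ.comp H.subtype)) h
  -- one orbit `G ⧸ H` for each generator `s` of `X^H`, its point `gH` mapping to `g • s`
  let v : (Σ i : Σ H : Subgroup G, S H, G ⧸ i.1) → X := fun a =>
    Quotient.liftOn' a.2 (fun g => ρ g a.1.2) fun g g' hgg' => by
      calc ρ g a.1.2 = ρ g (ρ (g⁻¹ * g') a.1.2) := by
            rw [hS_fixed a.1.1 a.1.2 ⟨g⁻¹ * g', QuotientGroup.leftRel_apply.1 hgg'⟩]
        _ = ρ g' a.1.2 := by rw [← Module.End.mul_apply, ← map_mul, mul_inv_cancel_left]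
  have hv (g : G) a : v (g • a) = ρ g (v a) := by
    obtain ⟨i, c⟩ := a
    induction c using QuotientGroup.induction_on with
    | H γ => exact LinearMap.congr_fun (map_mul ρ g γ) _
  have hcover (H : Subgroup G) : invariants (ρ.comp H.subtype) ≤
      (invariants ((ofMulActionFinsupp k G _).comp H.subtype)).map
        (Finsupp.linearCombination k v) := by
    rw [← hS H, Submodule.span_le]
    intro s hs
    refine ⟨Finsupp.single ⟨⟨H, s, hs⟩, ((1 : G) : G ⧸ H)⟩ 1, fun h => ?_, by simp [v]⟩
    change ofMulActionFinsupp k G _ h (Finsupp.single _ 1) = _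
    rw [ofMulActionFinsupp_single]
    congr 2
    exact congrArg (Sigma.mk _) (QuotientGroup.eq.2 (by simp))
  refine ⟨_, inferInstance, inferInstance, _, isIntertwiningMap_linearCombination ρ hv,
    fun x => ?_, hcover⟩
  obtain ⟨p, -, hp⟩ := hcover ⊥ fun h => by simp [Subgroup.mem_bot.1 h.2]
  exact ⟨p, hp⟩

end Cover

section Pullback

variable {k G V₁ V₂ X : Type*} [CommRing k] [Group G] [AddCommGroup V₁] [Module k V₁]
  [AddCommGroup V₂] [Module k V₂] [AddCommGroup X] [Module k X]
  {ρ₁ : Representation k G V₁} {ρ₂ : Representation k G V₂}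
  {ρX : Representation k G X} {f₁ : V₁ →ₗ[k] X} {f₂ : V₂ →ₗ[k] X}

noncomputable def pullback (h₁ : IsIntertwiningMap ρ₁ ρX f₁) (h₂ : IsIntertwiningMap ρ₂ ρX f₂) :
    Representation k G (LinearMap.pullback f₁ f₂) :=
  (ρ₁.prod ρ₂).subrepresentation _ fun g x (hx : f₁ x.1 = f₂ x.2) =>
    show f₁ (ρ₁ g x.1) = f₂ (ρ₂ g x.2) by rw [h₁.isIntertwining, h₂.isIntertwining, hx]

theorem CocyclesAreCoboundaries.pullback (h₁ : IsIntertwiningMap ρ₁ ρX f₁)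
    (h₂ : IsIntertwiningMap ρ₂ ρX f₂) (hρ₁ : ρ₁.CocyclesAreCoboundaries)
    (hρ₂ : ρ₂.CocyclesAreCoboundaries) (hf₂ : Function.Surjective f₂)
    (hinv : ρX.invariants ≤ ρ₂.invariants.map f₂) :
    (Representation.pullback h₁ h₂).CocyclesAreCoboundaries := by
  intro c hc
  have hc₁ (g h : G) : (c (g * h)).1.1 = ρ₁ g (c h).1.1 + (c g).1.1 :=
    congrArg (fun e : LinearMap.pullback f₁ f₂ => e.1.1) (hc g h)
  have hc₂ (g h : G) : (c (g * h)).1.2 = ρ₂ g (c h).1.2 + (c g).1.2 :=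
    congrArg (fun e : LinearMap.pullback f₁ f₂ => e.1.2) (hc g h)
  obtain ⟨p₁, hp₁⟩ := hρ₁ (fun g => (c g).1.1) hc₁
  obtain ⟨p₂, hp₂⟩ := hf₂ (f₁ p₁)
  set d : G → V₂ := fun g => (c g).1.2 - (ρ₂ g p₂ - p₂) with hd
  have hd_cocycle (g h : G) : d (g * h) = ρ₂ g (d h) + d g := by
    simp only [hd, hc₂, map_mul, Module.End.mul_apply, map_sub]
    abel
  obtain ⟨p, hp⟩ := hρ₂ d hd_cocycle
  have hfp : f₂ p ∈ ρX.invariants := fun g => by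
    have hfd : f₂ (d g) = 0 := by
      rw [hd, map_sub, ← LinearMap.mem_pullback.1 (c g).2, hp₁, map_sub, map_sub,
        h₁.isIntertwining, h₂.isIntertwining, hp₂, sub_self]
    rwa [hp, map_sub, h₂.isIntertwining, sub_eq_zero] at hfd
  obtain ⟨p', hp'_inv, hp'⟩ := hinv hfp
  have hmem : (p₁, p₂ + (p - p')) ∈ LinearMap.pullback f₁ f₂ := by
    rw [LinearMap.mem_pullback, map_add, map_sub, hp', sub_self, add_zero, hp₂]
  refine ⟨⟨_, hmem⟩, fun g => Subtype.ext (Prod.ext (hp₁ g) ?_)⟩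
  change (c g).1.2 = ρ₂ g (p₂ + (p - p')) - (p₂ + (p - p'))
  rw [show (c g).1.2 = d g + (ρ₂ g p₂ - p₂) by simp [hd], hp, map_add, map_sub, hp'_inv g]
  abel

end Pullback

noncomputable def dualDualEquiv {k G V : Type*} [CommRing k] [Group G] [AddCommGroup V]
    [Module k V] [Module.IsReflexive k V] (ρ : Representation k G V) : ρ.Equiv ρ.dual.dual :=
  Equiv.mk (Module.evalEquiv k V) fun g => by ext v f; simp [Module.Dual.transpose_apply]

end Representation

section ShortExact

variable {G A B C D : Type} [Group G] [AddCommGroup A] [Module ℤ A] [AddCommGroup B] [Module ℤ B]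
  [AddCommGroup C] [Module ℤ C] [AddCommGroup D] [Module ℤ D]
  {ρA : Representation ℤ G A} {ρB : Representation ℤ G B} {ρC : Representation ℤ G C}
  {f : A →ₗ[ℤ] B} {g : B →ₗ[ℤ] C}

theorem IsShortExactSeq.comp_equiv (h : IsShortExactSeq ρA ρB ρC f g)
    {ρD : Representation ℤ G D} (e : ρC.Equiv ρD) :
    IsShortExactSeq ρA ρB ρD f (e.toLinearEquiv.toLinearMap ∘ₗ g) := by
  obtain ⟨hf, hg, hf_inj, hg_surj, hexact⟩ := h
  refine ⟨hf, fun γ b => ?_, hf_inj, e.surjective.comp hg_surj, ?_⟩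
  · have he := e.toIntertwiningMap.isIntertwining
    simp only [Representation.Equiv.coe_toIntertwiningMap] at he
    change e (g (ρB γ b)) = ρD γ (e (g b))
    rw [hg, he]
  · rw [LinearEquiv.ker_comp, hexact]

theorem IsShortExactSeq.dual (h : IsShortExactSeq ρA ρB ρC f g) {s : C →ₗ[ℤ] B}
    (hs : g ∘ₗ s = LinearMap.id) :
    IsShortExactSeq ρC.dual ρB.dual ρA.dual g.dualMap f.dualMap := by
  obtain ⟨hf, hg, hf_inj, hg_surj, hexact⟩ := h
  have hfg : Function.Exact f g := LinearMap.exact_iff.2 hexact.symm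
  have hgs (c : C) : g (s c) = c := LinearMap.congr_fun hs c
  obtain ⟨r, hr⟩ : ∃ r : B →ₗ[ℤ] A, r ∘ₗ f = LinearMap.id :=
    ((hfg.split_tfae hf_inj hg_surj).out 0 1).1 (Exists.intro s hs)
  refine ⟨fun γ φ => ?_, fun γ φ => ?_, LinearMap.dualMap_injective_of_surjective hg_surj,
    fun φ => ?_, ?_⟩
  · ext b
    exact congrArg φ (hg _ _).symm
  · ext a
    exact congrArg φ (hf _ _).symm
  · refine ⟨φ ∘ₗ r, ?_⟩
    rw [LinearMap.dualMap_apply', LinearMap.comp_assoc, hr, LinearMap.comp_id]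
  · ext φ
    refine ⟨?_, fun hφ => ⟨φ ∘ₗ s, LinearMap.ext fun b => ?_⟩⟩
    · rintro ⟨ψ, rfl⟩
      ext a
      simp [hfg.apply_apply_eq_zero]
    · obtain ⟨a, ha⟩ := (hfg (b - s (g b))).1 (by rw [map_sub, hgs, sub_self])
      have hφa : φ (f a) = 0 := LinearMap.congr_fun hφ a
      rw [ha, map_sub, sub_eq_zero] at hφa
      exact hφa.symm

end ShortExact

namespace GammaLattice

open Representation

instance (L : GammaLattice Γ) : Module.Free ℤ L.carrier := L.free

instance (L : GammaLattice Γ) : Module.Finite ℤ L.carrier := L.finite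

theorem isCoflasque_iff (L : GammaLattice Γ) :
    L.IsCoflasque ↔ ∀ H : Subgroup Γ, CocyclesAreCoboundaries (L.ρ.comp H.subtype) :=
  forall_congr' fun _ => subsingleton_H1_iff_s13 _

theorem IsCoflasque.isFlasque_dual {L : GammaLattice Γ} (h : L.IsCoflasque) :
    L.dual.IsFlasque :=
  (isCoflasque_iff _).2 fun H => ((isCoflasque_iff L).1 h H).of_equiv (dualDualEquiv _)

theorem IsPermutation.dual {L : GammaLattice Γ} (h : L.IsPermutation) : L.dual.IsPermutation := by
  classical
  obtain ⟨ι, b, hb⟩ := h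
  have := Module.Finite.finite_basis b
  refine ⟨ι, b.dualBasis, fun γ i => ?_⟩
  obtain ⟨j, hj⟩ := hb γ i
  refine ⟨j, b.ext fun k => ?_⟩
  obtain ⟨m, hm⟩ := hb γ⁻¹ k
  change b.dualBasis i (L.ρ γ⁻¹ (b k)) = b.dualBasis j (b k)
  have hmk : m = i ↔ k = j := by
    rw [← b.injective.eq_iff, ← hm, L.ρ.inv_apply_eq_iff, hj, b.injective.eq_iff]
  simp only [hm, Module.Basis.dualBasis_apply_self, hmk]

theorem exists_coflasque_resolution [Finite Γ] (N : GammaLattice Γ) :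
    ∃ (C P : GammaLattice Γ) (ι : N.carrier →ₗ[ℤ] C.carrier) (π : C.carrier →ₗ[ℤ] P.carrier),
      C.IsCoflasque ∧ P.IsPermutation ∧ IsShortExactSeq N.ρ C.ρ P.ρ ι π := by
  obtain ⟨ψ, hψ, hψ_inj⟩ :=
    exists_injective_intertwiningMap_ofMulActionFinsupp N.ρ (Module.Free.chooseBasis ℤ N.carrier)
  let ρX := (ofMulActionFinsupp ℤ Γ _).quotient (LinearMap.range ψ) fun g => by
    rintro _ ⟨v, rfl⟩
    exact ⟨N.ρ g v, hψ.isIntertwining g v⟩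
  have hmkQ : IsIntertwiningMap (ofMulActionFinsupp ℤ Γ _) ρX (LinearMap.range ψ).mkQ :=
    ⟨fun _ _ => rfl⟩
  have hexact := LinearMap.exact_map_mkQ_range ψ
  obtain ⟨α, _, _, q, hq, hq_surj, hq_inv⟩ :=
    exists_ofMulActionFinsupp_surjective_on_invariants ρX
  let C : GammaLattice Γ := ⟨_, pullback hmkQ hq, inferInstance, inferInstance⟩
  let P : GammaLattice Γ := ⟨α →₀ ℤ, ofMulActionFinsupp ℤ Γ α, inferInstance, inferInstance⟩
  -- restricting `C.ρ` to `H` is definitionally the fibre product of the restrictions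
  have hC : C.IsCoflasque := (isCoflasque_iff C).2 fun H =>
    CocyclesAreCoboundaries.pullback (ρ₁ := (ofMulActionFinsupp ℤ Γ _).comp H.subtype)
      (ρ₂ := (ofMulActionFinsupp ℤ Γ α).comp H.subtype) (ρX := ρX.comp H.subtype)
      ⟨fun h => hmkQ.isIntertwining h⟩ ⟨fun h => hq.isIntertwining h⟩
      (ofMulActionFinsupp_cocyclesAreCoboundaries ℤ H _)
      (ofMulActionFinsupp_cocyclesAreCoboundaries ℤ H α) hq_surj (hq_inv H)
  have hP : P.IsPermutation :=
    ⟨α, Finsupp.basisSingleOne, fun g a => ⟨g • a, ofMulActionFinsupp_single g a 1⟩⟩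
  refine ⟨C, P, LinearMap.pullbackInl q ψ hexact.linearMap_comp_eq_zero,
    LinearMap.pullbackSnd _ q, hC, hP, fun g v => ?_, fun _ _ => rfl,
    LinearMap.pullbackInl_injective q _ hψ_inj,
    LinearMap.pullbackSnd_surjective q (Submodule.mkQ_surjective _),
    (LinearMap.exact_pullbackInl_pullbackSnd q hexact).linearMap_ker_eq.symm⟩
  exact Subtype.ext (Prod.ext (hψ.isIntertwining g v) (map_zero (P.ρ g)).symm)

end GammaLattice

/-- every Γ-lattice `M` admits a flasque resolution of the
second type `0 → P → F → M → 0` with `P` permutation and `F` flasque. -/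
theorem exists_flasque_resolution_second_type
    {Γ : Type} [Group Γ] [Finite Γ] (M : GammaLattice Γ) :
    ∃ (P F : GammaLattice Γ)
      (ι : P.carrier →ₗ[ℤ] F.carrier) (π : F.carrier →ₗ[ℤ] M.carrier),
      P.IsPermutation ∧ F.IsFlasque ∧
        IsShortExactSeq P.ρ F.ρ M.ρ ι π := by
  obtain ⟨C, P, ι, π, hC, hP, hses⟩ := GammaLattice.exists_coflasque_resolution M.dual
  have hπ : Function.Surjective π := hses.2.2.2.1
  obtain ⟨s, hs⟩ := Module.projective_lifting_property π LinearMap.id hπ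
  exact ⟨P.dual, C.dual, _, _, hP.dual, hC.isFlasque_dual,
    (hses.dual hs).comp_equiv (Representation.dualDualEquiv M.ρ).symm⟩
end
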